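/- arXiv:1303.3646 — 3 statements merged into one kernel-verified Lean document; each statement's English description precedes it below -/
import Mathlib

section
/- Let F be a field and let A, B ∈ SL₂(F), and suppose B has eigenvalue ε ∈ {±1} (so both eigenvalues of B equal ε). Then det(I - (A⊗B)·T) = (1 - ε·tr(A)·T + T²)². -/
/-!
The reciprocal characteristic polynomial `det (1 - T (A ⊗ B))` of a Kronecker product of `2 × 2`
matrices is `∏ (1 - αᵢ βⱼ T)` over the eigenvalues `αᵢ` of `A` and `βⱼ` of `B`, hence a polynomial in
the traces and determinants of `A` and `B`. For `B ∈ SL₂` with eigenvalue `ε = ±1` the other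
eigenvalue is `ε⁻¹ = ε`, so `tr B = 2ε`; with `det A = det B = 1` that polynomial is
`(1 - ε tr(A) T + T²)²`.
-/

open Polynomial Kronecker

namespace Matrix

variable {R : Type*} [CommRing R]

theorem det_one_sub_X_smul_kronecker_fin_two (A B : Matrix (Fin 2) (Fin 2) R) :
    (1 - (X : R[X]) • (A ⊗ₖ B).map C).det =
      1 - C (A.trace * B.trace) * X
        + C (A.det * B.trace ^ 2 + B.det * A.trace ^ 2 - 2 * A.det * B.det) * X ^ 2
        - C (A.det * B.det * A.trace * B.trace) * X ^ 3 + C (A.det ^ 2 * B.det ^ 2) * X ^ 4 := by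
  have e0 : finProdFinEquiv.symm (0 : Fin 4) = ((0, 0) : Fin 2 × Fin 2) := rfl
  have e1 : finProdFinEquiv.symm (1 : Fin 4) = ((0, 1) : Fin 2 × Fin 2) := rfl
  have e2 : finProdFinEquiv.symm (2 : Fin 4) = ((1, 0) : Fin 2 × Fin 2) := rfl
  have e3 : finProdFinEquiv.symm (3 : Fin 4) = ((1, 1) : Fin 2 × Fin 2) := rfl
  rw [← det_reindex_self finProdFinEquiv, det_fin_two, trace_fin_two, det_fin_two, trace_fin_two]
  simp only [det_succ_row_zero (n := 3), Fin.sum_univ_four, det_fin_three, submatrix_apply,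
    reindex_apply, Fin.succAbove, Fin.reduceSucc, Fin.reduceCastSucc, Fin.reduceLT, if_true,
    if_false, e0, e1, e2, e3, sub_apply, one_apply, smul_apply, map_apply, kroneckerMap_apply,
    smul_eq_mul, Prod.mk.injEq, Fin.reduceEq, and_true, and_false, map_mul, map_sub, map_add,
    map_pow, map_ofNat, Fin.coe_ofNat_eq_mod]
  ring

theorem trace_eq_two_mul_of_isRoot_charpoly [Nontrivial R] {B : Matrix (Fin 2) (Fin 2) R} {ε : R}
    (hε : IsUnit ε) (hdet : B.det = ε ^ 2) (hroot : B.charpoly.IsRoot ε) : B.trace = 2 * ε := by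
  rw [charpoly_fin_two] at hroot
  simp only [IsRoot, eval_add, eval_sub, eval_mul, eval_pow, eval_X, eval_C, hdet] at hroot
  refine hε.mul_left_cancel ?_
  linear_combination -hroot

end Matrix

/-- If `A, B ∈ SL₂(F)` and `B` has eigenvalue `ε ∈ {±1}`, then
`det(I - (A⊗B)T) = (1 - ε·tr(A)·T + T²)²`. -/
theorem kronecker_det_of_pm_one_eigenvalue (F : Type*) [Field F]
    (A B : Matrix (Fin 2) (Fin 2) F) (hA : A.det = 1) (hB : B.det = 1)
    (ε : F) (hε : ε = 1 ∨ ε = -1) (hroot : B.charpoly.IsRoot ε) :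
    (1 - (Polynomial.X : Polynomial F) • (A ⊗ₖ B).map Polynomial.C).det
      = (1 - Polynomial.C (ε * A.trace) * Polynomial.X + Polynomial.X ^ 2) ^ 2 := by
  have hε_sq : ε ^ 2 = 1 := by rcases hε with rfl | rfl <;> norm_num
  have htrB : B.trace = 2 * ε :=
    Matrix.trace_eq_two_mul_of_isRoot_charpoly (.of_pow_eq_one hε_sq two_ne_zero)
      (hB.trans hε_sq.symm) hroot
  have hCε_sq : C ε ^ 2 = (1 : F[X]) := by rw [← C_pow, hε_sq, C_1]
  rw [Matrix.det_one_sub_X_smul_kronecker_fin_two, hA, hB, htrB]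
  simp only [map_mul, map_sub, map_add, map_pow, map_ofNat, map_one]
  linear_combination (4 - C A.trace ^ 2) * X ^ 2 * hCε_sq
end

section
/- Let m be a positive integer such that for all sufficiently large primes ℓ, m divides lcm(4, ℓ-1) or m divides lcm(4, ℓ+1). Then m divides 12. -/
/-!
If `q` is a prime power with `q ∤ 4` and `q ∣ m`, then `q ∣ lcm(4, ℓ ∓ 1)` forces `q ∣ ℓ ∓ 1`,
so every large prime `ℓ` is `±1` modulo `q`. By Dirichlet's theorem every unit of `ZMod q` is the
residue of such a prime, so all units of `ZMod q` are `±1`. This fails for `q = 8` (take `3`),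
`q = 9` (take `2`) and `q = p ≥ 5` prime (take `2`), hence `m ∣ 2² · 3`.
-/

theorem IsPrimePow.dvd_or_dvd_of_dvd_lcm {q a b : ℕ} (hq : IsPrimePow q) (h : q ∣ Nat.lcm a b) :
    q ∣ a ∨ q ∣ b := by
  obtain ⟨p, n, hp, -, rfl⟩ := hq
  rw [← Nat.prime_iff] at hp
  rcases eq_or_ne a 0 with rfl | ha
  · exact Or.inl (dvd_zero _)
  rcases eq_or_ne b 0 with rfl | hb
  · exact Or.inr (dvd_zero _)
  simp only [hp.pow_dvd_iff_le_factorization ha, hp.pow_dvd_iff_le_factorization hb,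
    hp.pow_dvd_iff_le_factorization (Nat.lcm_ne_zero ha hb), Nat.factorization_lcm ha hb,
    Finsupp.sup_apply] at h ⊢
  exact le_sup_iff.mp h

theorem ZMod.eq_one_or_eq_neg_one_of_eventually_dvd_lcm {q k N : ℕ} (hq : IsPrimePow q)
    (hk : ¬ q ∣ k)
    (hN : ∀ ℓ : ℕ, N ≤ ℓ → ℓ.Prime → q ∣ Nat.lcm k (ℓ - 1) ∨ q ∣ Nat.lcm k (ℓ + 1))
    {a : ZMod q} (ha : IsUnit a) : a = 1 ∨ a = -1 := by
  have : NeZero q := ⟨hq.ne_zero⟩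
  obtain ⟨ℓ, hℓN, hℓ, rfl⟩ := Nat.forall_exists_prime_gt_and_eq_mod ha N
  refine (hN ℓ hℓN.le hℓ).imp (fun h => ?_) (fun h => ?_)
  · have h0 := (ZMod.natCast_eq_zero_iff _ _).mpr ((hq.dvd_or_dvd_of_dvd_lcm h).resolve_left hk)
    rwa [Nat.cast_sub hℓ.one_le, Nat.cast_one, sub_eq_zero] at h0
  · have h0 := (ZMod.natCast_eq_zero_iff _ _).mpr ((hq.dvd_or_dvd_of_dvd_lcm h).resolve_left hk)
    rwa [Nat.cast_add, Nat.cast_one, add_eq_zero_iff_eq_neg] at h0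

theorem ZMod.exists_isUnit_ne_one_ne_neg_one {p : ℕ} (hp : p.Prime) (h5 : 5 ≤ p) :
    ∃ a : ZMod p, IsUnit a ∧ a ≠ 1 ∧ a ≠ -1 := by
  have : Fact p.Prime := ⟨hp⟩
  have ne_zero : ∀ n : ℕ, 0 < n → n < 5 → (n : ZMod p) ≠ 0 := fun n hn0 hn5 h =>
    absurd (Nat.le_of_dvd hn0 ((ZMod.natCast_eq_zero_iff n p).mp h)) (by omega)
  refine ⟨2, isUnit_iff_ne_zero.mpr (by exact_mod_cast ne_zero 2 (by norm_num) (by norm_num)),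
    fun h => ne_zero 1 one_pos (by norm_num) ?_, fun h => ne_zero 3 (by norm_num) (by norm_num) ?_⟩
  · push_cast
    linear_combination h
  · push_cast
    linear_combination h

theorem Nat.dvd_of_forall_prime_exists_pow_dvd_not_pow_succ_dvd {m n : ℕ}
    (h : ∀ p, p.Prime → ∃ k, p ^ k ∣ n ∧ ¬ p ^ (k + 1) ∣ m) : m ∣ n := by
  refine (Nat.dvd_iff_prime_pow_dvd_dvd n m).2 fun p j hp hj => ?_
  obtain ⟨k, hkn, hkm⟩ := h p hp
  have hjk : j ≤ k := by
    by_contra! hkj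
    exact hkm ((pow_dvd_pow p hkj).trans hj)
  exact (pow_dvd_pow p hjk).trans hkn

theorem dvd_twelve_of_dvd_lcm_general (m : ℕ)
    (h : ∃ N : ℕ, ∀ ℓ : ℕ, N ≤ ℓ → ℓ.Prime →
      (m ∣ Nat.lcm 4 (ℓ - 1) ∨ m ∣ Nat.lcm 4 (ℓ + 1))) :
    m ∣ 12 := by
  obtain ⟨N, hN⟩ := h
  have not_dvd : ∀ q, IsPrimePow q → ¬ q ∣ 4 → (∃ a : ZMod q, IsUnit a ∧ a ≠ 1 ∧ a ≠ -1) →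
      ¬ q ∣ m := by
    rintro q hq h4 ⟨a, ha, ha1, ha2⟩ hqm
    have hqN := fun ℓ hℓ hp => (hN ℓ hℓ hp).imp hqm.trans hqm.trans
    exact (ZMod.eq_one_or_eq_neg_one_of_eventually_dvd_lcm hq h4 hqN ha).elim ha1 ha2
  refine Nat.dvd_of_forall_prime_exists_pow_dvd_not_pow_succ_dvd fun p hp => ?_
  by_cases h2 : p = 2
  · subst h2
    exact ⟨2, by norm_num,
      not_dvd 8 (Nat.prime_two.isPrimePow.pow three_ne_zero) (by norm_num) ⟨3, by decide⟩⟩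
  by_cases h3 : p = 3
  · subst h3
    exact ⟨1, by norm_num,
      not_dvd 9 (Nat.prime_three.isPrimePow.pow two_ne_zero) (by norm_num) ⟨2, by decide⟩⟩
  have h5 := hp.five_le_of_ne_two_of_ne_three h2 h3
  refine ⟨0, one_dvd 12, ?_⟩
  rw [zero_add, pow_one]
  exact not_dvd p hp.isPrimePow (fun h4 => by have := Nat.le_of_dvd four_pos h4; omega)
    (ZMod.exists_isUnit_ne_one_ne_neg_one hp h5)

/-- If a positive integer `m` divides `lcm(4, ℓ-1)` or `lcm(4, ℓ+1)` for all sufficiently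
large primes `ℓ`, then `m` divides 12. -/
theorem dvd_twelve_of_dvd_lcm (m : ℕ) (hm : 0 < m)
    (h : ∃ N : ℕ, ∀ ℓ : ℕ, N ≤ ℓ → ℓ.Prime →
      (m ∣ Nat.lcm 4 (ℓ - 1) ∨ m ∣ Nat.lcm 4 (ℓ + 1))) :
    m ∣ 12 :=
  dvd_twelve_of_dvd_lcm_general m h
end

section
/- Let ℓ ≥ 5 be a prime and let G be a subgroup of SL₂(𝔽_ℓ) that admits a surjective group homomorphism onto PSL₂(𝔽_ℓ). Then G = SL₂(𝔽_ℓ). -/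
/-!
Since `G` surjects onto `PSL₂(𝔽_ℓ) = SL₂(𝔽_ℓ) / {±1}`, it has at least half as many elements as
`SL₂(𝔽_ℓ)`, so its index is at most `2`. A subgroup of index `2` contains every commutator, and
`SL₂(𝔽_ℓ)` is perfect for `ℓ ≥ 5`, so the index is `1`.
-/

open Matrix MatrixGroups

theorem Subgroup.index_le_card_of_card_quotient_le {S : Type*} [Group S] [Finite S]
    {H N : Subgroup S} (h : Nat.card (S ⧸ N) ≤ Nat.card H) : H.index ≤ Nat.card N := by
  have hH : 0 < Nat.card H := Nat.card_pos
  refine Nat.le_of_mul_le_mul_left ?_ hH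
  calc Nat.card H * H.index = Nat.card N * N.index := by
        rw [H.card_mul_index, N.card_mul_index]
    _ ≤ Nat.card N * Nat.card H := Nat.mul_le_mul_left _ h
    _ = Nat.card H * Nat.card N := Nat.mul_comm _ _

theorem Subgroup.commutator_le_of_index_eq_two {G : Type*} [Group G] {H : Subgroup G}
    (h : H.index = 2) : _root_.commutator G ≤ H :=
  Subgroup.commutator_le.mpr fun a _ b _ ↦ by
    simp only [commutatorElement_def, mul_mem_iff_of_index_two h, inv_mem_iff]
    tauto

theorem Group.IsPerfect.index_ne_two {G : Type*} [Group G] [Group.IsPerfect G]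
    (H : Subgroup G) : H.index ≠ 2 := fun h ↦ by
  have hH : H = ⊤ := top_le_iff.mp (IsPerfect.commutator_eq_top (G := G) ▸
    Subgroup.commutator_le_of_index_eq_two h)
  simp [hH] at h

theorem Matrix.SpecialLinearGroup.card_center_le {n R : Type*} [Fintype n] [DecidableEq n]
    [Nonempty n] [CommRing R] [IsDomain R] :
    Nat.card (Subgroup.center (SpecialLinearGroup n R)) ≤ Fintype.card n :=
  (Nat.card_congr (center_equiv_rootsOfUnity' (Classical.arbitrary n)).toEquiv).trans_le
    (card_rootsOfUnity R _)

theorem ZMod.isPerfect_specialLinearGroup_fin_two {ℓ : ℕ} [Fact ℓ.Prime] (hℓ : 5 ≤ ℓ) :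
    Group.IsPerfect SL(2, ZMod ℓ) := by
  have natCast_ne_zero {n : ℕ} (hn0 : 0 < n) (hnℓ : n < ℓ) : (n : ZMod ℓ) ≠ 0 := fun h ↦
    absurd (Nat.le_of_dvd hn0 ((ZMod.natCast_eq_zero_iff n ℓ).mp h)) (by omega)
  have h2 : (2 : ZMod ℓ) ≠ 0 := by exact_mod_cast natCast_ne_zero (n := 2) (by omega) (by omega)
  have h4 : (2 : ZMod ℓ) ^ 2 ≠ 1 := fun h ↦
    natCast_ne_zero (n := 3) (by omega) (by omega) (by push_cast; linear_combination h)
  exact ⟨SL2.commutator_eq_top h2 h4⟩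

/-- If a subgroup `G` of `SL₂(𝔽_ℓ)` (`ℓ ≥ 5` prime) surjects onto `PSL₂(𝔽_ℓ)`, then
`G = SL₂(𝔽_ℓ)`. -/
theorem subgroup_eq_top_of_surjective_onto_psl (ℓ : ℕ) [Fact ℓ.Prime] (hℓ : 5 ≤ ℓ)
    (G : Subgroup (Matrix.SpecialLinearGroup (Fin 2) (ZMod ℓ)))
    (f : G →* (Matrix.SpecialLinearGroup (Fin 2) (ZMod ℓ) ⧸
          Subgroup.center (Matrix.SpecialLinearGroup (Fin 2) (ZMod ℓ))))
    (hf : Function.Surjective f) :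
    G = ⊤ := by
  have := ZMod.isPerfect_specialLinearGroup_fin_two hℓ
  have hle : G.index ≤ 2 :=
    (Subgroup.index_le_card_of_card_quotient_le (Nat.card_le_card_of_surjective f hf)).trans
      (by simpa using SpecialLinearGroup.card_center_le (n := Fin 2) (R := ZMod ℓ))
  have hne2 : G.index ≠ 2 := Group.IsPerfect.index_ne_two G
  have hne0 : G.index ≠ 0 := Subgroup.index_ne_zero_of_finite
  exact Subgroup.index_eq_one.mp (by omega)
end
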